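/- arXiv:1906.05463 — 2 statements merged into one kernel-verified Lean document; each statement's English description precedes it below -/
import Mathlib

section
/- Let A be a central and essential arrangement in Q^l (defined over Z) and p a good prime for A. Then I(bar(A)) = I(bar(A_p)) if and only if 𝔉(A) = 𝔉(A_p), where 𝔉(B) denotes the set of increasing l-tuples of indices whose corresponding hyperplanes of B intersect in dimension 0. -/
/-! Since the arrangement is central, the point `[0 : ⋯ : 0 : 1]` lies on every projective
hyperplane of `bar 𝒜` except the hyperplane at infinity, over any field. So an `(l+1)`-tuple
avoiding the hyperplane at infinity always lies in `𝓘(bar 𝒜)`, while a tuple containing it lies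
in `𝓘(bar 𝒜)` iff the remaining `l` forms have a common nonzero zero, i.e. their determinant
vanishes, i.e. the `l`-tuple is not in `𝔉(𝒜)`. Both equalities thus say that the same
increasing `l`-tuples of forms have vanishing determinant over `ℚ` and over `𝔽_p`. -/

open MvPolynomial
open scoped Classical

/-- The affine hyperplane solution set `{x | ∑ aₖ xₖ = b}` in `K^l`. -/
def hypSet (K : Type*) [CommRing K] {l : ℕ} (a : Fin l → K) (b : K) : Set (Fin l → K) :=
  {x | ∑ k, a k * x k = b}

/-- Dimension of a subset of `K^l` (intended: an affine subspace), with `adim ∅ = -1`. -/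
noncomputable def adim (K : Type*) [CommRing K] {l : ℕ} (S : Set (Fin l → K)) : ℤ :=
  if S = ∅ then -1 else Module.finrank K (affineSpan K S).direction

/-- The homogenized forms of the cone `c𝒜` of the affine arrangement with forms
`x ↦ ∑ aᵢₖ xₖ - bᵢ`; the last index corresponds to the hyperplane at infinity. A projective
point of `KP^l` is represented by a nonzero `v : Fin (l+1) → K`, and `v` lies on the `i`-th
projective hyperplane of `bar 𝒜` iff `coneForm a b i v = 0`. -/
def coneForm {K : Type*} [CommRing K] {l n : ℕ} (a : Fin n → Fin l → K) (b : Fin n → K)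
    (i : Fin (n + 1)) (v : Fin (l + 1) → K) : K :=
  if h : (i : ℕ) < n then
    (∑ k : Fin l, a ⟨i, h⟩ k * v k.castSucc) - b ⟨i, h⟩ * v (Fin.last l)
  else v (Fin.last l)

/-- `𝓘(bar 𝒜)`: the set of strictly increasing `(l+1)`-tuples of indices in `[n+1]` whose
corresponding projective hyperplanes of `bar 𝒜` have nonempty common intersection. -/
def Ibar (K : Type*) [CommRing K] {l n : ℕ} (a : Fin n → Fin l → K) (b : Fin n → K) :
    Set (Fin (l + 1) → Fin (n + 1)) :=
  {t | StrictMono t ∧ ∃ v : Fin (l + 1) → K, v ≠ 0 ∧ ∀ j, coneForm a b (t j) v = 0}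

/-- `𝔉(𝒜)`: increasing `l`-tuples of indices whose hyperplanes intersect in dimension `0`. -/
noncomputable def Frak (K : Type*) [CommRing K] {l n : ℕ} (a : Fin n → Fin l → K) :
    Set (Fin l → Fin n) :=
  {t | StrictMono t ∧ adim K (⋂ j, hypSet K (a (t j)) 0) = 0}

/-- The linear form `∑ aₖ xₖ` as a polynomial in `ℤ[x₁,…,x_l]`. -/
noncomputable def intForm {l : ℕ} (a : Fin l → ℤ) : MvPolynomial (Fin l) ℤ :=
  ∑ k, C (a k) * X k

/-- `p` is a good prime for the central arrangement with integral forms `a`: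
the reduction mod `p` of `Q(𝒜) = ∏ αᵢ` is a reduced (squarefree) polynomial. -/
noncomputable def GoodPrime {l n : ℕ} (a : Fin n → Fin l → ℤ) (p : ℕ) : Prop :=
  p.Prime ∧ Squarefree (MvPolynomial.map (Int.castRingHom (ZMod p)) (∏ i, intForm (a i)))

/-- No prime number divides (all the coefficients of) any of the forms `αᵢ`. -/
def Primitive {l n : ℕ} (a : Fin n → Fin l → ℤ) : Prop :=
  ∀ (i : Fin n) (q : ℕ), q.Prime → ∃ k, ¬ (q : ℤ) ∣ a i k

section Arrangement

variable {K : Type*} {l n : ℕ}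

lemma iInter_hypSet_zero_eq_ker [CommRing K] {ι : Type*} (f : ι → Fin l → K) :
    ⋂ i, hypSet K (f i) 0 = (LinearMap.ker (Matrix.of f).mulVecLin : Set (Fin l → K)) := by
  ext x
  simp [hypSet, funext_iff, Matrix.mulVec, dotProduct]

lemma adim_coe_submodule [CommRing K] (V : Submodule K (Fin l → K)) :
    adim K (V : Set (Fin l → K)) = Module.finrank K V := by
  have hspan : affineSpan K (V : Set (Fin l → K)) = V.toAffineSubspace :=
    AffineSubspace.affineSpan_coe V.toAffineSubspace
  rw [adim, if_neg (Set.Nonempty.ne_empty ⟨0, V.zero_mem⟩), hspan,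
    Submodule.toAffineSubspace_direction]

lemma mem_Frak_iff [Field K] {a : Fin n → Fin l → K} {t : Fin l → Fin n} :
    t ∈ Frak K a ↔ StrictMono t ∧ (Matrix.of (a ∘ t)).det ≠ 0 := by
  change StrictMono t ∧ adim K (⋂ j, hypSet K ((a ∘ t) j) 0) = 0 ↔ _
  rw [iInter_hypSet_zero_eq_ker, adim_coe_submodule, Nat.cast_eq_zero, Submodule.finrank_eq_zero,
    Matrix.ker_mulVecLin_eq_bot_iff, ne_eq, ← Matrix.exists_mulVec_eq_zero_iff.not]
  simp only [not_exists, not_and, not_imp_not]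

lemma coneForm_castSucc [CommRing K] (a : Fin n → Fin l → K) (b : Fin n → K) (i : Fin n)
    (v : Fin (l + 1) → K) :
    coneForm a b i.castSucc v = ∑ k, a i k * v k.castSucc - b i * v (Fin.last l) := by
  simp [coneForm]

lemma coneForm_last [CommRing K] (a : Fin n → Fin l → K) (b : Fin n → K)
    (v : Fin (l + 1) → K) : coneForm a b (Fin.last n) v = v (Fin.last l) := by
  simp [coneForm]

def withInfinity (t : Fin l → Fin n) : Fin (l + 1) → Fin (n + 1) :=
  Fin.snoc (fun j => (t j).castSucc) (Fin.last n)

lemma strictMono_withInfinity {t : Fin l → Fin n} (ht : StrictMono t) :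
    StrictMono (withInfinity t) := by
  intro i j hij
  induction j using Fin.lastCases with
  | last =>
    obtain ⟨i, rfl⟩ := Fin.exists_castSucc_eq.mpr hij.ne
    simp [withInfinity]
  | cast j =>
    obtain ⟨i, rfl⟩ := Fin.exists_castSucc_eq.mpr (hij.trans (Fin.castSucc_lt_last j)).ne
    simpa [withInfinity] using ht (Fin.castSucc_lt_castSucc_iff.mp hij)

lemma exists_eq_withInfinity {t : Fin (l + 1) → Fin (n + 1)} (ht : StrictMono t)
    (hlast : t (Fin.last l) = Fin.last n) :
    ∃ s : Fin l → Fin n, StrictMono s ∧ t = withInfinity s := by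
  have hne_last (j : Fin l) : t j.castSucc ≠ Fin.last n :=
    hlast ▸ (ht (Fin.castSucc_lt_last j)).ne
  choose s hs using fun j => Fin.exists_castSucc_eq.mpr (hne_last j)
  refine ⟨s, fun i j hij => ?_, ?_⟩
  · have := ht (Fin.castSucc_lt_castSucc_iff.mpr hij)
    rwa [← hs, ← hs, Fin.castSucc_lt_castSucc_iff] at this
  · rw [← Fin.snoc_init_self t, hlast]
    simp only [withInfinity, hs]
    rfl

lemma mem_Ibar_zero_of_last_ne [CommRing K] [Nontrivial K] {a : Fin n → Fin l → K}
    {t : Fin (l + 1) → Fin (n + 1)} (ht : StrictMono t) (hlast : t (Fin.last l) ≠ Fin.last n) :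
    t ∈ Ibar K a 0 := by
  refine ⟨ht, Pi.single (Fin.last l) 1, by simp, fun j => ?_⟩
  have hj : t j ≠ Fin.last n := (ht.monotone (Fin.le_last j)).trans_lt
    (Fin.lt_last_iff_ne_last.mpr hlast) |>.ne
  obtain ⟨i, hi⟩ := Fin.exists_castSucc_eq.mpr hj
  simp [← hi, coneForm_castSucc]

lemma withInfinity_mem_Ibar_zero_iff [CommRing K] [IsDomain K] {a : Fin n → Fin l → K}
    {t : Fin l → Fin n} (ht : StrictMono t) :
    withInfinity t ∈ Ibar K a 0 ↔ (Matrix.of (a ∘ t)).det = 0 := by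
  have hforms (v : Fin (l + 1) → K) : (∀ j, coneForm a 0 (withInfinity t j) v = 0) ↔
      (Matrix.of (a ∘ t)).mulVec (Fin.init v) = 0 ∧ v (Fin.last l) = 0 := by
    rw [Fin.forall_fin_succ', _root_.funext_iff]
    simp [withInfinity, coneForm_castSucc, coneForm_last, Matrix.mulVec, dotProduct, Fin.init]
  rw [Ibar, Set.mem_ofPred_eq, and_iff_right (strictMono_withInfinity ht),
    ← Matrix.exists_mulVec_eq_zero_iff]
  simp only [hforms]
  constructor
  · rintro ⟨v, hv, hMv, hlast⟩
    refine ⟨Fin.init v, fun h => hv ?_, hMv⟩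
    rw [← Fin.snoc_init_self v, h, hlast]
    ext j
    induction j using Fin.lastCases <;> simp
  · rintro ⟨w, hw, hMw⟩
    refine ⟨Fin.snoc w 0, fun h => hw ?_, by simpa using hMw, by simp⟩
    funext k
    simpa using congrFun h k.castSucc

variable {L : Type*}

lemma Frak_eq_Frak_iff [Field K] [Field L] (a : Fin n → Fin l → K) (a' : Fin n → Fin l → L) :
    Frak K a = Frak L a' ↔ ∀ t : Fin l → Fin n, StrictMono t →
      ((Matrix.of (a ∘ t)).det = 0 ↔ (Matrix.of (a' ∘ t)).det = 0) := by
  simp only [Set.ext_iff, mem_Frak_iff]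
  refine forall_congr' fun t => ?_
  by_cases ht : StrictMono t <;> simp [ht, not_iff_not]

lemma Ibar_zero_eq_Ibar_zero_iff [CommRing K] [IsDomain K] [CommRing L] [IsDomain L]
    (a : Fin n → Fin l → K) (a' : Fin n → Fin l → L) :
    Ibar K a 0 = Ibar L a' 0 ↔ ∀ t : Fin l → Fin n, StrictMono t →
      ((Matrix.of (a ∘ t)).det = 0 ↔ (Matrix.of (a' ∘ t)).det = 0) := by
  refine ⟨fun h t ht => ?_, fun h => Set.ext fun t => ?_⟩
  · rw [← withInfinity_mem_Ibar_zero_iff ht, ← withInfinity_mem_Ibar_zero_iff ht, h]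
  by_cases ht : StrictMono t
  · by_cases hlast : t (Fin.last l) = Fin.last n
    · obtain ⟨s, hs, rfl⟩ := exists_eq_withInfinity ht hlast
      rw [withInfinity_mem_Ibar_zero_iff hs, withInfinity_mem_Ibar_zero_iff hs, h s hs]
    · exact iff_of_true (mem_Ibar_zero_of_last_ne ht hlast) (mem_Ibar_zero_of_last_ne ht hlast)
  · exact iff_of_false (fun h => ht h.1) (fun h => ht h.1)

lemma Ibar_zero_eq_Ibar_zero_iff_Frak_eq_Frak [Field K] [Field L] (a : Fin n → Fin l → K)
    (a' : Fin n → Fin l → L) : Ibar K a 0 = Ibar L a' 0 ↔ Frak K a = Frak L a' := by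
  rw [Ibar_zero_eq_Ibar_zero_iff, Frak_eq_Frak_iff]

end Arrangement

theorem stmt4_general {l n : ℕ} (a : Fin n → Fin l → ℤ)
    (p : ℕ) (hgood : GoodPrime a p) :
    Ibar ℚ (fun i k => (a i k : ℚ)) 0 = Ibar (ZMod p) (fun i k => (a i k : ZMod p)) 0 ↔
      Frak ℚ (fun i k => (a i k : ℚ)) = Frak (ZMod p) (fun i k => (a i k : ZMod p)) :=
  have : Fact p.Prime := ⟨hgood.1⟩
  Ibar_zero_eq_Ibar_zero_iff_Frak_eq_Frak _ _

/-- Lemma 4.3: for a central essential arrangement `𝒜` over `ℚ` with integral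
forms and a good prime `p`, `𝓘(bar 𝒜) = 𝓘(bar 𝒜_p)` iff `𝔉(𝒜) = 𝔉(𝒜_p)`. -/
theorem stmt4 {l n : ℕ} (a : Fin n → Fin l → ℤ) (hprim : Primitive a)
    (hess : (Frak ℚ (fun i k => (a i k : ℚ))).Nonempty)
    (p : ℕ) (hgood : GoodPrime a p) :
    Ibar ℚ (fun i k => (a i k : ℚ)) 0 = Ibar (ZMod p) (fun i k => (a i k : ZMod p)) 0 ↔
      Frak ℚ (fun i k => (a i k : ℚ)) = Frak (ZMod p) (fun i k => (a i k : ZMod p)) :=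
  stmt4_general a p hgood
end

section
/- Let α_i, α_j ∈ Z[x_1,...,x_l] be linear forms defining distinct hyperplanes of a central arrangement over Q, neither divisible by any prime. If the reductions (α_i)_p and (α_j)_p mod a prime p are nonzero scalar multiples of each other, then p is not σ-lucky for the ideal ⟨α_i, α_j⟩ in Z[x_1,...,x_l]. -/
open MvPolynomial
open scoped Classical

/-- The leading term (exponent) `LT_σ(f)` of `f` with respect to the term ordering `σ`. -/
noncomputable def LTerm {l : ℕ} (σ : MonomialOrder (Fin l)) (f : MvPolynomial (Fin l) ℤ) :
    Fin l →₀ ℕ :=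
  σ.toSyn.symm (f.support.sup fun d => σ.toSyn d)

/-- The leading coefficient `LC_σ(f)` of `f` with respect to `σ`. -/
noncomputable def LCoef {l : ℕ} (σ : MonomialOrder (Fin l)) (f : MvPolynomial (Fin l) ℤ) : ℤ :=
  f.coeff (LTerm σ f)

/-- The leading monomial `LM_σ(f) = LC_σ(f)·LT_σ(f)` of `f`, as a polynomial. -/
noncomputable def LMon {l : ℕ} (σ : MonomialOrder (Fin l)) (f : MvPolynomial (Fin l) ℤ) :
    MvPolynomial (Fin l) ℤ :=
  monomial (LTerm σ f) (LCoef σ f)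

/-- `G` is a minimal strong `σ`-Gröbner basis of the ideal `I ⊆ ℤ[x₁,…,x_l]`. -/
def MinStrongGB {l : ℕ} (σ : MonomialOrder (Fin l)) (G : Finset (MvPolynomial (Fin l) ℤ))
    (I : Ideal (MvPolynomial (Fin l) ℤ)) : Prop :=
  (∀ g ∈ G, g ≠ 0) ∧ Ideal.span (G : Set (MvPolynomial (Fin l) ℤ)) = I ∧
  (∀ f ∈ I, f ≠ 0 → ∃ g ∈ G, LMon σ g ∣ LMon σ f) ∧
  (∀ g ∈ G, ∀ g' ∈ G, g ≠ g' → ¬ LMon σ g ∣ LMon σ g')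

/-- `p` is `σ`-lucky for `I`: it divides no leading coefficient of (any) minimal strong
`σ`-Gröbner basis of `I`. -/
def SigmaLucky {l : ℕ} (σ : MonomialOrder (Fin l)) (p : ℕ)
    (I : Ideal (MvPolynomial (Fin l) ℤ)) : Prop :=
  ∀ G : Finset (MvPolynomial (Fin l) ℤ), MinStrongGB σ G I → ∀ g ∈ G, ¬ (p : ℤ) ∣ LCoef σ g

/-!
Over a principal ideal ring `R`, every ideal `I ⊆ R[x₁,…,x_l]` has a finite strong Gröbner basis.
For each exponent `t`, the coefficients at `t` of the elements of `I` of degree `≼ t` form an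
ideal `C_t` of `R`, monotone in `t`. Dickson's lemma and the ascending chain condition leave only
finitely many distinct ideals `C_t`, each attained at finitely many minimal exponents, and elements
of `I` whose leading coefficients generate these ideals form the basis.

If the prime `p` divides no leading coefficient of a strong Gröbner basis of `I`, reduction by the
basis shows that `p f ∈ I` implies `f ∈ I`. For `I = ⟨α₁, α₂⟩` with `α₁ ≡ b α₂ (mod p)`, this puts
`(α₁ - b α₂) / p` into `I`, hence (comparing linear coefficients) into `ℤ α₁ + ℤ α₂`, which forces
`α₁` and `α₂` to be proportional over `ℚ`.
-/

theorem Set.finite_range_of_monotone {α β : Type*} [Preorder α] [WellQuasiOrderedLE α]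
    [PartialOrder β] [WellFoundedGT β] {f : α → β} (hf : Monotone f) : (Set.range f).Finite := by
  refine Set.not_infinite.mp fun hinf => ?_
  let b : ℕ → β := fun n => hinf.natEmbedding _ n
  have hpwo : (Set.range f).IsPWO := by
    simpa using (Set.isPWO_of_wellQuasiOrderedLE Set.univ).image_of_monotone hf
  obtain ⟨φ, hφ⟩ := hpwo.exists_monotone_subseq (f := b) fun n => (hinf.natEmbedding _ n).2
  have hinj : Function.Injective (b ∘ φ) :=
    ((Subtype.val_injective.comp (hinf.natEmbedding _).injective).comp φ.injective :)
  exact not_strictMono_of_wellFoundedGT _ (hφ.strictMono_of_injective hinj)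

theorem exists_finset_le_eq_of_monotone {α β : Type*} [PartialOrder α] [WellQuasiOrderedLE α]
    [PartialOrder β] [WellFoundedGT β] {f : α → β} (hf : Monotone f) :
    ∃ T : Finset α, ∀ a, ∃ a₀ ∈ T, a₀ ≤ a ∧ f a₀ = f a := by
  have hmin : ∀ b, {a | Minimal (f · = b) a}.Finite := fun b =>
    (setOfPred_minimal_antichain _).finite_of_partiallyWellOrderedOn
      (Set.isPWO_of_wellQuasiOrderedLE _)
  obtain ⟨T, hT⟩ := ((Set.finite_range_of_monotone hf).biUnion fun b _ => hmin b).exists_finset_coe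
  refine ⟨T, fun a => ?_⟩
  obtain ⟨a₀, ha₀, hmin₀⟩ :=
    (Set.isPWO_of_wellQuasiOrderedLE {a' | f a' = f a}).exists_le_minimal rfl
  refine ⟨a₀, ?_, ha₀, hmin₀.prop⟩
  rw [← Finset.mem_coe, hT]
  exact Set.mem_biUnion (Set.mem_range_self a) hmin₀

namespace MonomialOrder

variable {σ R : Type*} [CommRing R] {m : MonomialOrder σ}

theorem leadingTerm_dvd_leadingTerm_iff {f g : MvPolynomial σ R} (hf : f ≠ 0) :
    m.leadingTerm g ∣ m.leadingTerm f ↔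
      m.degree g ≤ m.degree f ∧ m.leadingCoeff g ∣ m.leadingCoeff f := by
  rw [leadingTerm, leadingTerm, monomial_dvd_monomial,
    or_iff_right (m.leadingCoeff_ne_zero_iff.mpr hf)]

theorem exists_sub_mul_eq_zero_or_degree_lt {f g : MvPolynomial σ R} (hf : f ≠ 0)
    (h : m.leadingTerm g ∣ m.leadingTerm f) :
    ∃ q, f - q * g = 0 ∨ m.degree (f - q * g) ≺[m] m.degree f := by
  obtain ⟨hle, c, hc⟩ := (leadingTerm_dvd_leadingTerm_iff hf).mp h
  set e := m.degree f - m.degree g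
  have hsplit : e + m.degree g = m.degree f := tsub_add_cancel_of_le hle
  refine ⟨monomial e c, or_iff_not_imp_left.mpr fun h0 => ?_⟩
  have hcoeff : (monomial e c * g).coeff (m.degree f) = m.leadingCoeff f := by
    rw [← hsplit, coeff_monomial_mul, hc, mul_comm]; rfl
  have hdeg : m.degree (monomial e c * g) ≼[m] m.degree f :=
    calc m.toSyn (m.degree (monomial e c * g))
        _ ≤ m.toSyn (m.degree (monomial e c)) + m.toSyn (m.degree g) := toSyn_degree_mul_le
        _ ≤ m.toSyn e + m.toSyn (m.degree g) := add_le_add_left (degree_monomial_le c) _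
        _ = m.toSyn (m.degree f) := by rw [← map_add, hsplit]
  refine lt_of_le_of_ne (degree_sub_le.trans (sup_le le_rfl hdeg)) fun heq => h0 ?_
  rw [← m.coeff_degree_eq_zero_iff, m.toSyn.injective heq, coeff_sub, hcoeff]
  exact sub_self _

theorem subset_span_of_forall_leadingTerm_dvd {G S : Set (MvPolynomial σ R)}
    (hS : ∀ f ∈ S, ∀ q, ∀ g ∈ G, f - q * g ∈ S)
    (hG : ∀ f ∈ S, f ≠ 0 → ∃ g ∈ G, m.leadingTerm g ∣ m.leadingTerm f) :
    S ⊆ Ideal.span G := by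
  suffices ∀ s : m.syn, ∀ f ∈ S, m.toSyn (m.degree f) = s → f ∈ Ideal.span G from
    fun f hf => this _ f hf rfl
  intro s
  induction s using WellFoundedLT.induction with
  | _ s ih =>
  rintro f hf rfl
  by_cases hf0 : f = 0
  · rw [hf0]; exact zero_mem _
  obtain ⟨g, hgG, hdvd⟩ := hG f hf hf0
  obtain ⟨q, hq⟩ := exists_sub_mul_eq_zero_or_degree_lt hf0 hdvd
  rw [← sub_add_cancel f (q * g)]
  refine add_mem ?_ (Ideal.mul_mem_left _ q (Ideal.subset_span hgG))
  rcases hq with h0 | hlt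
  · rw [h0]; exact zero_mem _
  · exact ih _ hlt _ (hS f hf q g hgG) rfl

variable (m) in
structure IsStrongGroebnerBasis (I : Ideal (MvPolynomial σ R))
    (G : Finset (MvPolynomial σ R)) : Prop where
  ne_zero : ∀ g ∈ G, g ≠ 0
  subset : (G : Set (MvPolynomial σ R)) ⊆ I
  exists_leadingTerm_dvd : ∀ f ∈ I, f ≠ 0 → ∃ g ∈ G, m.leadingTerm g ∣ m.leadingTerm f

namespace IsStrongGroebnerBasis

variable {I : Ideal (MvPolynomial σ R)} {G : Finset (MvPolynomial σ R)}

theorem span_eq (h : m.IsStrongGroebnerBasis I G) : Ideal.span G = I :=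
  le_antisymm (Ideal.span_le.mpr h.subset) <|
    subset_span_of_forall_leadingTerm_dvd
      (fun _ hf q _ hg => I.sub_mem hf (I.mul_mem_left q (h.subset hg)))
      h.exists_leadingTerm_dvd

theorem erase (h : m.IsStrongGroebnerBasis I G) {g g' : MvPolynomial σ R} (hg : g ∈ G)
    (hne : g ≠ g') (hdvd : m.leadingTerm g ∣ m.leadingTerm g') :
    m.IsStrongGroebnerBasis I (G.erase g') where
  ne_zero _ hh := h.ne_zero _ (Finset.mem_of_mem_erase hh)
  subset _ hh := h.subset (Finset.mem_of_mem_erase hh)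
  exists_leadingTerm_dvd f hf hf0 := by
    obtain ⟨h', hh', hd⟩ := h.exists_leadingTerm_dvd f hf hf0
    by_cases hh'g' : h' = g'
    · exact ⟨g, Finset.mem_erase.mpr ⟨hne, hg⟩, hdvd.trans (hh'g' ▸ hd)⟩
    · exact ⟨h', Finset.mem_erase.mpr ⟨hh'g', hh'⟩, hd⟩

theorem exists_minimal (h : m.IsStrongGroebnerBasis I G) :
    ∃ G', m.IsStrongGroebnerBasis I G' ∧
      ∀ g ∈ G', ∀ g' ∈ G', g ≠ g' → ¬ m.leadingTerm g ∣ m.leadingTerm g' := by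
  induction G using Finset.strongInduction with
  | H G ih =>
  by_cases hmin : ∀ g ∈ G, ∀ g' ∈ G, g ≠ g' → ¬ m.leadingTerm g ∣ m.leadingTerm g'
  · exact ⟨G, h, hmin⟩
  push Not at hmin
  obtain ⟨g, hg, g', hg', hne, hdvd⟩ := hmin
  exact ih _ (Finset.erase_ssubset hg') (h.erase hg hne hdvd)

theorem mem_of_C_mul_mem [IsDomain R] [IsPrincipalIdealRing R]
    (h : m.IsStrongGroebnerBasis I G) {p : R} (hp : Prime p)
    (hG : ∀ g ∈ G, ¬ p ∣ m.leadingCoeff g) {f : MvPolynomial σ R} (hf : C p * f ∈ I) :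
    f ∈ I := by
  refine h.span_eq ▸
    subset_span_of_forall_leadingTerm_dvd (m := m) (S := {f | C p * f ∈ I}) ?_ ?_ hf
  · intro f hf q g hg
    rw [Set.mem_ofPred_eq, mul_sub, ← mul_assoc]
    exact I.sub_mem hf (I.mul_mem_left _ (h.subset hg))
  · intro f hf hf0
    have hCp : (C p : MvPolynomial σ R) ≠ 0 := C_ne_zero.mpr hp.ne_zero
    obtain ⟨g, hg, hdvd⟩ := h.exists_leadingTerm_dvd _ hf (mul_ne_zero hCp hf0)
    rw [leadingTerm_dvd_leadingTerm_iff (mul_ne_zero hCp hf0), degree_mul hCp hf0, degree_C,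
      zero_add, leadingCoeff_mul, leadingCoeff_C] at hdvd
    refine ⟨g, hg, (leadingTerm_dvd_leadingTerm_iff hf0).mpr ⟨hdvd.1, ?_⟩⟩
    exact (((hp.coprime_iff_not_dvd).mpr (hG g hg)).symm).dvd_of_dvd_mul_left hdvd.2

end IsStrongGroebnerBasis

variable (m) in
def coeffIdeal (I : Ideal (MvPolynomial σ R)) (t : σ →₀ ℕ) : Ideal R where
  carrier := {c | ∃ f ∈ I, m.degree f ≼[m] t ∧ f.coeff t = c}
  add_mem' := by
    rintro _ _ ⟨f, hf, hft, rfl⟩ ⟨g, hg, hgt, rfl⟩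
    exact ⟨f + g, I.add_mem hf hg, degree_add_le.trans (sup_le hft hgt), coeff_add t f g⟩
  zero_mem' := ⟨0, I.zero_mem, by simp, coeff_zero t⟩
  smul_mem' := by
    rintro r _ ⟨f, hf, hft, rfl⟩
    exact ⟨r • f, I.smul_of_tower_mem r hf, degree_smul_le.trans hft, coeff_smul t r f⟩

section CoeffIdeal

variable {I : Ideal (MvPolynomial σ R)}

theorem leadingCoeff_mem_coeffIdeal {f : MvPolynomial σ R} (hf : f ∈ I) :
    m.leadingCoeff f ∈ m.coeffIdeal I (m.degree f) :=
  ⟨f, hf, le_rfl, rfl⟩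

theorem exists_degree_eq_of_mem_coeffIdeal {t : σ →₀ ℕ} {c : R} (hc : c ∈ m.coeffIdeal I t)
    (hc0 : c ≠ 0) : ∃ f ∈ I, m.degree f = t ∧ m.leadingCoeff f = c := by
  obtain ⟨f, hf, hft, rfl⟩ := hc
  have hdeg : m.degree f = t :=
    m.toSyn.injective (le_antisymm hft (m.le_degree (mem_support_iff.mpr hc0)))
  exact ⟨f, hf, hdeg, by rw [leadingCoeff, hdeg]⟩

theorem coeffIdeal_mono : Monotone (m.coeffIdeal I) := by
  rintro s t hst _ ⟨f, hf, hfs, rfl⟩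
  set e := t - s
  have hsplit : e + s = t := tsub_add_cancel_of_le hst
  refine ⟨monomial e 1 * f, I.mul_mem_left _ hf, ?_, ?_⟩
  · calc m.toSyn (m.degree (monomial e 1 * f))
        _ ≤ m.toSyn (m.degree (monomial e (1 : R))) + m.toSyn (m.degree f) :=
          toSyn_degree_mul_le
        _ ≤ m.toSyn e + m.toSyn s := add_le_add (degree_monomial_le 1) hfs
        _ = m.toSyn t := by rw [← map_add, hsplit]
  · rw [← hsplit, coeff_monomial_mul, one_mul]

end CoeffIdeal

theorem exists_isStrongGroebnerBasis [Finite σ] [IsPrincipalIdealRing R]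
    (I : Ideal (MvPolynomial σ R)) : ∃ G, m.IsStrongGroebnerBasis I G := by
  obtain ⟨T, hT⟩ := exists_finset_le_eq_of_monotone (m.coeffIdeal_mono (I := I))
  have hgen : ∀ t, ∃ g, m.coeffIdeal I t ≠ ⊥ → g ∈ I ∧ g ≠ 0 ∧ m.degree g = t ∧
      Ideal.span {m.leadingCoeff g} = m.coeffIdeal I t := by
    intro t
    by_cases ht : m.coeffIdeal I t = ⊥
    · exact ⟨0, fun h => absurd ht h⟩
    have hd0 : Submodule.IsPrincipal.generator (m.coeffIdeal I t) ≠ 0 :=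
      (Submodule.IsPrincipal.eq_bot_iff_generator_eq_zero _).not.mp ht
    obtain ⟨g, hgI, hdeg, hlc⟩ :=
      exists_degree_eq_of_mem_coeffIdeal (Submodule.IsPrincipal.generator_mem _) hd0
    refine ⟨g, fun _ => ⟨hgI, fun hg0 => hd0 ?_, hdeg, ?_⟩⟩
    · rw [← hlc, hg0, leadingCoeff_zero]
    · rw [hlc, Ideal.span_singleton_generator]
  choose gen hgen using hgen
  refine ⟨(T.filter fun t => m.coeffIdeal I t ≠ ⊥).image gen, ?_, ?_, ?_⟩
  · simp only [Finset.mem_image, Finset.mem_filter]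
    rintro _ ⟨t, ⟨-, ht⟩, rfl⟩
    exact (hgen t ht).2.1
  · simp only [Finset.coe_image, Finset.coe_filter, Set.image_subset_iff]
    exact fun t ht => (hgen t ht.2).1
  · intro f hf hf0
    obtain ⟨t₀, ht₀T, ht₀, hCeq⟩ := hT (m.degree f)
    have hne : m.coeffIdeal I t₀ ≠ ⊥ := by
      rw [hCeq, Submodule.ne_bot_iff]
      exact ⟨_, leadingCoeff_mem_coeffIdeal hf, m.leadingCoeff_ne_zero_iff.mpr hf0⟩
    obtain ⟨-, -, hdeg, hspan⟩ := hgen t₀ hne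
    refine ⟨gen t₀, Finset.mem_image_of_mem _ (Finset.mem_filter.mpr ⟨ht₀T, hne⟩), ?_⟩
    rw [leadingTerm_dvd_leadingTerm_iff hf0, hdeg, ← Ideal.mem_span_singleton, hspan, hCeq]
    exact ⟨ht₀, leadingCoeff_mem_coeffIdeal hf⟩

end MonomialOrder

section LinearForms

variable {l : ℕ}

theorem intForm_smul (c : ℤ) (a : Fin l → ℤ) : intForm (c • a) = C c * intForm a := by
  simp only [intForm, Finset.mul_sum, Pi.smul_apply, smul_eq_mul, C_mul, mul_assoc]

theorem intForm_sub (a b : Fin l → ℤ) : intForm (a - b) = intForm a - intForm b := by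
  simp only [intForm, Pi.sub_apply, C_sub, sub_mul, Finset.sum_sub_distrib]

theorem coeff_single_mul_intForm (c : MvPolynomial (Fin l) ℤ) (a : Fin l → ℤ) (k : Fin l) :
    (c * intForm a).coeff (Finsupp.single k 1) = c.coeff 0 * a k := by
  simp only [intForm, Finset.mul_sum, mul_left_comm c, coeff_sum, coeff_C_mul, coeff_mul_X']
  simp [mul_comm]

theorem coeff_single_intForm (a : Fin l → ℤ) (k : Fin l) :
    (intForm a).coeff (Finsupp.single k 1) = a k := by
  simpa using coeff_single_mul_intForm 1 a k

theorem exists_eq_smul_add_smul_of_intForm_mem_span_pair {a₁ a₂ u : Fin l → ℤ}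
    (h : intForm u ∈ Ideal.span {intForm a₁, intForm a₂}) :
    ∃ m n : ℤ, u = m • a₁ + n • a₂ := by
  obtain ⟨c₁, c₂, hc⟩ := Ideal.mem_span_pair.mp h
  refine ⟨c₁.coeff 0, c₂.coeff 0, funext fun k => ?_⟩
  have := congrArg (coeff (Finsupp.single k 1)) hc
  rw [coeff_add, coeff_single_mul_intForm, coeff_single_mul_intForm, coeff_single_intForm] at this
  exact this.symm

end LinearForms

theorem exists_rat_eq_mul_of_sub_smul_eq_smul {ι : Type*} {a₁ a₂ u : ι → ℤ} {p b m n : ℤ}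
    (hb : ¬ p ∣ b) (hu : a₁ - b • a₂ = p • u) (hmn : u = m • a₁ + n • a₂) :
    ∃ c : ℚ, ∀ k, (a₂ k : ℚ) = c * a₁ k := by
  have hden : p * n + b ≠ 0 := fun h => hb ⟨-n, by linear_combination h⟩
  refine ⟨(1 - p * m) / (p * n + b), fun k => ?_⟩
  have hk : (p * n + b) * a₂ k = (1 - p * m) * a₁ k := by
    have h₁ := congrFun hu k
    have h₂ := congrFun hmn k
    simp only [Pi.sub_apply, Pi.smul_apply, Pi.add_apply, smul_eq_mul] at h₁ h₂
    linear_combination -h₁ - p * h₂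
  rw [div_mul_eq_mul_div, eq_div_iff (by exact_mod_cast hden)]
  exact_mod_cast (mul_comm _ _).trans hk

theorem MonomialOrder.IsStrongGroebnerBasis.minStrongGB {l : ℕ} {σ : MonomialOrder (Fin l)}
    {I : Ideal (MvPolynomial (Fin l) ℤ)} {G : Finset (MvPolynomial (Fin l) ℤ)}
    (h : σ.IsStrongGroebnerBasis I G)
    (hmin : ∀ g ∈ G, ∀ g' ∈ G, g ≠ g' → ¬ σ.leadingTerm g ∣ σ.leadingTerm g') :
    MinStrongGB σ G I :=
  ⟨h.ne_zero, h.span_eq, h.exists_leadingTerm_dvd, hmin⟩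

theorem stmt12_general {l : ℕ} (a₁ a₂ : Fin l → ℤ)
    (hne : ∀ c : ℚ, ¬ ∀ k, (a₂ k : ℚ) = c * (a₁ k : ℚ))
    (σ : MonomialOrder (Fin l)) (p : ℕ) (hp : p.Prime)
    (hmult : ∃ β : ZMod p, β ≠ 0 ∧ ∀ k, (a₁ k : ZMod p) = β * (a₂ k : ZMod p)) :
    ¬ SigmaLucky σ p (Ideal.span {intForm a₁, intForm a₂}) := by
  intro hlucky
  obtain ⟨β, hβ0, hβ⟩ := hmult
  obtain ⟨b, rfl⟩ := ZMod.intCast_surjective β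
  have hb : ¬ (p : ℤ) ∣ b := by rwa [← ZMod.intCast_zmod_eq_zero_iff_dvd]
  have hdvd : ∀ k, (p : ℤ) ∣ a₁ k - b * a₂ k := fun k => by
    rw [← ZMod.intCast_zmod_eq_zero_iff_dvd, Int.cast_sub, Int.cast_mul, hβ k, sub_self]
  choose u hu using hdvd
  have hu' : a₁ - b • a₂ = (p : ℤ) • u := funext hu
  obtain ⟨G₀, hG₀⟩ := σ.exists_isStrongGroebnerBasis (Ideal.span {intForm a₁, intForm a₂})
  obtain ⟨G, hG, hmin⟩ := hG₀.exists_minimal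
  have huI : intForm u ∈ Ideal.span {intForm a₁, intForm a₂} := by
    refine hG.mem_of_C_mul_mem (Nat.prime_iff_prime_int.mp hp) (hlucky G (hG.minStrongGB hmin)) ?_
    rw [← intForm_smul, ← hu', intForm_sub, intForm_smul]
    exact Ideal.mem_span_pair.mpr ⟨1, -C b, by ring⟩
  obtain ⟨m, n, hmn⟩ := exists_eq_smul_add_smul_of_intForm_mem_span_pair huI
  obtain ⟨c, hc⟩ := exists_rat_eq_mul_of_sub_smul_eq_smul hb hu' hmn
  exact hne c hc

/-- Lemma 6.1: let `αᵢ, αⱼ` be primitive integral linear forms that are not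
proportional (they define distinct hyperplanes of a central arrangement over `ℚ`). If
`(αᵢ)_p = β (αⱼ)_p` for some nonzero `β ∈ 𝔽_p`, then `p` is not `σ`-lucky for
`⟨αᵢ, αⱼ⟩ ⊆ ℤ[x₁,…,x_l]`. -/
theorem stmt12 {l : ℕ} (a₁ a₂ : Fin l → ℤ)
    (hprim₁ : ∀ q : ℕ, q.Prime → ∃ k, ¬ (q : ℤ) ∣ a₁ k)
    (hprim₂ : ∀ q : ℕ, q.Prime → ∃ k, ¬ (q : ℤ) ∣ a₂ k)
    (hne : ∀ c : ℚ, ¬ ∀ k, (a₂ k : ℚ) = c * (a₁ k : ℚ))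
    (σ : MonomialOrder (Fin l)) (p : ℕ) (hp : p.Prime)
    (hmult : ∃ β : ZMod p, β ≠ 0 ∧ ∀ k, (a₁ k : ZMod p) = β * (a₂ k : ZMod p)) :
    ¬ SigmaLucky σ p (Ideal.span {intForm a₁, intForm a₂}) :=
  stmt12_general a₁ a₂ hne σ p hp hmult
end
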